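/- arXiv:2404.07784 — 2 statements merged into one kernel-verified Lean document; each statement's English description precedes it below -/
import Mathlib

section
/- The following product formulas hold: P₊ Π± = k± P₊ ± Θ P₋ and P₋ Π± = k∓ P₋ ± Θ P₊ (for each choice of sign). Consequently P± Π± P± = k₊ P± and P± Π∓ P∓ = ∓ Θ P∓. -/
open Matrix Complex

noncomputable section

/-- Pauli matrix σ₁. -/
def sigma1 : Matrix (Fin 2) (Fin 2) ℂ := !![0, 1; 1, 0]

/-- Pauli matrix σ₂. -/
def sigma2 : Matrix (Fin 2) (Fin 2) ℂ := !![0, -Complex.I; Complex.I, 0]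

/-- Pauli matrix σ₃. -/
def sigma3 : Matrix (Fin 2) (Fin 2) ℂ := !![1, 0; 0, -1]

/-- The Dirac matrices α₁, α₂, α₃ in 2×2-block form `[[0, σⱼ],[σⱼ, 0]]`. -/
def diracAlpha : Fin 3 → Matrix (Fin 4) (Fin 4) ℂ :=
  ![Matrix.reindex finSumFinEquiv finSumFinEquiv (Matrix.fromBlocks 0 sigma1 sigma1 0),
    Matrix.reindex finSumFinEquiv finSumFinEquiv (Matrix.fromBlocks 0 sigma2 sigma2 0),
    Matrix.reindex finSumFinEquiv finSumFinEquiv (Matrix.fromBlocks 0 sigma3 sigma3 0)]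

/-- The Dirac matrix β = `[[I₂, 0],[0, −I₂]]`. -/
def diracBeta : Matrix (Fin 4) (Fin 4) ℂ :=
  Matrix.reindex finSumFinEquiv finSumFinEquiv
    (Matrix.fromBlocks (1 : Matrix (Fin 2) (Fin 2) ℂ) 0 0 (-1 : Matrix (Fin 2) (Fin 2) ℂ))

/-- α·x = x₁α₁ + x₂α₂ + x₃α₃. -/
def alphaDot (x : Fin 3 → ℝ) : Matrix (Fin 4) (Fin 4) ℂ :=
  (x 0 : ℂ) • diracAlpha 0 + (x 1 : ℂ) • diracAlpha 1 + (x 2 : ℂ) • diracAlpha 2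

/-- Euclidean inner product on ℝ³. -/
def inner3 (X Y : Fin 3 → ℝ) : ℝ := X 0 * Y 0 + X 1 * Y 1 + X 2 * Y 2

/-- Euclidean norm on ℝ³. -/
def norm3 (X : Fin 3 → ℝ) : ℝ := Real.sqrt (inner3 X X)

/-- Cross product on ℝ³. -/
def cross3 (X Y : Fin 3 → ℝ) : Fin 3 → ℝ :=
  ![X 1 * Y 2 - X 2 * Y 1, X 2 * Y 0 - X 0 * Y 2, X 0 * Y 1 - X 1 * Y 0]

/-- γ₅ := −i α₁α₂α₃. -/
def gamma5 : Matrix (Fin 4) (Fin 4) ℂ :=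
  (-Complex.I) • (diracAlpha 0 * diracAlpha 1 * diracAlpha 2)

/-- S·X := −γ₅ (α·X). -/
def sDot (X : Fin 3 → ℝ) : Matrix (Fin 4) (Fin 4) ℂ := -(gamma5 * alphaDot X)

/-- P₊ := (I₄ − iβ(α·ν))/2. -/
def Pplus (ν : Fin 3 → ℝ) : Matrix (Fin 4) (Fin 4) ℂ :=
  ((1 : ℂ) / 2) • (1 - Complex.I • (diracBeta * alphaDot ν))

/-- P₋ := (I₄ + iβ(α·ν))/2. -/
def Pminus (ν : Fin 3 → ℝ) : Matrix (Fin 4) (Fin 4) ℂ :=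
  ((1 : ℂ) / 2) • (1 + Complex.I • (diracBeta * alphaDot ν))

/-- λ := √(|ν × ξ|² + 1). -/
def lam (ν ξ : Fin 3 → ℝ) : ℝ :=
  Real.sqrt (inner3 (cross3 ν ξ) (cross3 ν ξ) + 1)

/-- Π₊ := (1/2)(I₄ + λ⁻¹(S·τ − iβ(α·ν))), τ = ν × ξ. -/
def Piplus (ν ξ : Fin 3 → ℝ) : Matrix (Fin 4) (Fin 4) ℂ :=
  ((1 : ℂ) / 2) •
    (1 + ((lam ν ξ : ℂ))⁻¹ • (sDot (cross3 ν ξ) - Complex.I • (diracBeta * alphaDot ν)))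

/-- Π₋ := (1/2)(I₄ − λ⁻¹(S·τ − iβ(α·ν))), τ = ν × ξ. -/
def Piminus (ν ξ : Fin 3 → ℝ) : Matrix (Fin 4) (Fin 4) ℂ :=
  ((1 : ℂ) / 2) •
    (1 - ((lam ν ξ : ℂ))⁻¹ • (sDot (cross3 ν ξ) - Complex.I • (diracBeta * alphaDot ν)))

/-- ρ₊ := (i⟨ν,ξ⟩ + λ)/s. -/
def rhoP (ν ξ : Fin 3 → ℝ) (s : ℝ) : ℂ :=
  (Complex.I * (inner3 ν ξ : ℂ) + (lam ν ξ : ℂ)) / (s : ℂ)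

/-- ρ₋ := (i⟨ν,ξ⟩ − λ)/s. -/
def rhoM (ν ξ : Fin 3 → ℝ) (s : ℝ) : ℂ :=
  (Complex.I * (inner3 ν ξ : ℂ) - (lam ν ξ : ℂ)) / (s : ℂ)

/-- L₀ := s⁻¹ (iα·ν)(α·ξ + β). -/
def L0 (ν ξ : Fin 3 → ℝ) (s : ℝ) : Matrix (Fin 4) (Fin 4) ℂ :=
  ((s : ℂ))⁻¹ • ((Complex.I • alphaDot ν) * (alphaDot ξ + diracBeta))

/-- k₊ := (1 + λ⁻¹)/2. -/
def kPlus (ν ξ : Fin 3 → ℝ) : ℝ := (1 + (lam ν ξ)⁻¹) / 2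

/-- k₋ := (1 − λ⁻¹)/2. -/
def kMinus (ν ξ : Fin 3 → ℝ) : ℝ := (1 - (lam ν ξ)⁻¹) / 2

/-- Θ := (2λ)⁻¹ S·τ, τ = ν × ξ. -/
def theta (ν ξ : Fin 3 → ℝ) : Matrix (Fin 4) (Fin 4) ℂ :=
  ((2 * lam ν ξ : ℝ) : ℂ)⁻¹ • sDot (cross3 ν ξ)

/-- The fundamental solution φ_{m,z,w} of the free Dirac operator. -/
def phiFS (m : ℝ) (z w : ℂ) (x : Fin 3 → ℝ) : Matrix (Fin 4) (Fin 4) ℂ :=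
  (Complex.exp (Complex.I * w * (norm3 x : ℂ)) / (4 * (Real.pi : ℂ) * (norm3 x : ℂ))) •
    (z • (1 : Matrix (Fin 4) (Fin 4) ℂ) + (m : ℂ) • diracBeta +
      ((1 - Complex.I * w * (norm3 x : ℂ)) * Complex.I / ((norm3 x : ℂ) ^ 2)) • alphaDot x)

lemma dA0 : diracAlpha 0 = !![0,0,0,1; 0,0,1,0; 0,1,0,0; 1,0,0,0] := by
  ext i j; fin_cases i <;> fin_cases j <;> rfl
lemma dA1 : diracAlpha 1 = !![0,0,0,-Complex.I; 0,0,Complex.I,0; 0,-Complex.I,0,0; Complex.I,0,0,0] := by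
  ext i j; fin_cases i <;> fin_cases j <;> rfl
lemma dA2 : diracAlpha 2 = !![0,0,1,0; 0,0,0,-1; 1,0,0,0; 0,-1,0,0] := by
  ext i j; fin_cases i <;> fin_cases j <;> rfl
lemma dB : diracBeta = !![1,0,0,0; 0,1,0,0; 0,0,-1,0; 0,0,0,-1] := by
  ext i j; fin_cases i <;> fin_cases j <;>
    first | rfl | (show -(1 : Matrix (Fin 2) (Fin 2) ℂ) _ _ = _; simp [Matrix.one_apply])
set_option maxHeartbeats 1000000 in
lemma dG5 : gamma5 = !![0,0,1,0; 0,0,0,1; 1,0,0,0; 0,1,0,0] := by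
  rw [gamma5, dA0, dA1, dA2]
  ext i j; fin_cases i <;> fin_cases j <;>
    simp [Matrix.mul_apply, Fin.sum_univ_four, Complex.ext_iff]
  all_goals norm_num [Matrix.vecHead, Matrix.vecTail]
set_option maxHeartbeats 1000000 in
lemma hA2mat (ν : Fin 3 → ℝ) (h : inner3 ν ν = 1) :
    (Complex.I • (diracBeta * alphaDot ν)) * (Complex.I • (diracBeta * alphaDot ν)) = 1 := by
  have hR : ν 0 ^ 2 + ν 1 ^ 2 + ν 2 ^ 2 = 1 := by
    simp [inner3] at h; linear_combination h
  ext i j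
  fin_cases i <;> fin_cases j <;>
    simp [-mul_eq_zero, alphaDot, dA0, dA1, dA2, dB, Matrix.mul_apply, Fin.sum_univ_four,
      Matrix.one_apply, Complex.ext_iff]
  all_goals norm_num [Matrix.vecHead, Matrix.vecTail]
  all_goals constructor <;> first | (ring_nf; linear_combination hR) | ring
set_option maxHeartbeats 1000000 in
lemma dS (X : Fin 3 → ℝ) : sDot X =
    !![-(X 2:ℂ), -(X 0:ℂ)+(X 1:ℂ)*Complex.I, 0, 0;
       -(X 0:ℂ)-(X 1:ℂ)*Complex.I, (X 2:ℂ), 0, 0;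
       0, 0, -(X 2:ℂ), -(X 0:ℂ)+(X 1:ℂ)*Complex.I;
       0, 0, -(X 0:ℂ)-(X 1:ℂ)*Complex.I, (X 2:ℂ)] := by
  rw [sDot, dG5]
  ext i j
  fin_cases i <;> fin_cases j <;>
    simp [-mul_eq_zero, alphaDot, dA0, dA1, dA2, Matrix.mul_apply, Fin.sum_univ_four,
      Complex.ext_iff]
  all_goals norm_num [Matrix.vecHead, Matrix.vecTail]
  all_goals constructor <;> ring

set_option maxHeartbeats 1000000 in
lemma hASmat (ν ξ : Fin 3 → ℝ) :
    (Complex.I • (diracBeta * alphaDot ν)) * sDot (cross3 ν ξ)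
      = -(sDot (cross3 ν ξ) * (Complex.I • (diracBeta * alphaDot ν))) := by
  rw [dS]
  ext i j
  fin_cases i <;> fin_cases j <;>
    simp [-mul_eq_zero, alphaDot, cross3, dA0, dA1, dA2, dB, Matrix.mul_apply, Fin.sum_univ_four,
      Complex.ext_iff]
  all_goals norm_num [Matrix.vecHead, Matrix.vecTail]
  all_goals constructor <;> ring
section Abstract
variable {R : Type*} [Ring R] [Module ℂ R] [SMulCommClass ℂ R R] [IsScalarTower ℂ R R]
variable (A S : R) (c : ℂ)

lemma absL1 (hA : A*A = 1) (hAS : A*S = -(S*A)) :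
    (((1:ℂ)/2) • (1 - A)) * (((1:ℂ)/2) • (1 + c • (S - A)))
      = ((1+c)/2) • (((1:ℂ)/2) • (1 - A)) + ((c/2) • S) * (((1:ℂ)/2) • (1 + A)) := by
  simp only [smul_sub, smul_add, mul_add, add_mul, sub_mul, mul_sub, smul_mul_assoc,
    mul_smul_comm, mul_one, one_mul, smul_smul, hA, hAS, smul_neg, neg_smul]
  module

lemma absL2 (hA : A*A = 1) (hAS : A*S = -(S*A)) :
    (((1:ℂ)/2) • (1 - A)) * (((1:ℂ)/2) • (1 - c • (S - A)))
      = ((1-c)/2) • (((1:ℂ)/2) • (1 - A)) - ((c/2) • S) * (((1:ℂ)/2) • (1 + A)) := by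
  simp only [smul_sub, smul_add, mul_add, add_mul, sub_mul, mul_sub, smul_mul_assoc,
    mul_smul_comm, mul_one, one_mul, smul_smul, hA, hAS, smul_neg, neg_smul]
  module

lemma absL3 (hA : A*A = 1) (hAS : A*S = -(S*A)) :
    (((1:ℂ)/2) • (1 + A)) * (((1:ℂ)/2) • (1 + c • (S - A)))
      = ((1-c)/2) • (((1:ℂ)/2) • (1 + A)) + ((c/2) • S) * (((1:ℂ)/2) • (1 - A)) := by
  simp only [smul_sub, smul_add, mul_add, add_mul, sub_mul, mul_sub, smul_mul_assoc,
    mul_smul_comm, mul_one, one_mul, smul_smul, hA, hAS, smul_neg, neg_smul]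
  module

lemma absL4 (hA : A*A = 1) (hAS : A*S = -(S*A)) :
    (((1:ℂ)/2) • (1 + A)) * (((1:ℂ)/2) • (1 - c • (S - A)))
      = ((1+c)/2) • (((1:ℂ)/2) • (1 + A)) - ((c/2) • S) * (((1:ℂ)/2) • (1 - A)) := by
  simp only [smul_sub, smul_add, mul_add, add_mul, sub_mul, mul_sub, smul_mul_assoc,
    mul_smul_comm, mul_one, one_mul, smul_smul, hA, hAS, smul_neg, neg_smul]
  module

lemma absPp2 (hA : A*A = 1) :
    (((1:ℂ)/2) • (1 - A)) * (((1:ℂ)/2) • (1 - A)) = ((1:ℂ)/2) • (1 - A) := by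
  simp only [smul_sub, mul_sub, sub_mul, smul_mul_assoc, mul_smul_comm, mul_one, one_mul,
    smul_smul, hA]
  module

lemma absPm2 (hA : A*A = 1) :
    (((1:ℂ)/2) • (1 + A)) * (((1:ℂ)/2) • (1 + A)) = ((1:ℂ)/2) • (1 + A) := by
  simp only [smul_add, mul_add, add_mul, smul_mul_assoc, mul_smul_comm, mul_one, one_mul,
    smul_smul, hA]
  module

lemma absPmPp (hA : A*A = 1) :
    (((1:ℂ)/2) • (1 + A)) * (((1:ℂ)/2) • (1 - A)) = 0 := by
  simp only [smul_sub, smul_add, mul_add, add_mul, sub_mul, mul_sub, smul_mul_assoc,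
    mul_smul_comm, mul_one, one_mul, smul_smul, hA]
  module

lemma absPpPm (hA : A*A = 1) :
    (((1:ℂ)/2) • (1 - A)) * (((1:ℂ)/2) • (1 + A)) = 0 := by
  simp only [smul_sub, smul_add, mul_add, add_mul, sub_mul, mul_sub, smul_mul_assoc,
    mul_smul_comm, mul_one, one_mul, smul_smul, hA]
  module

end Abstract

-- STATEMENT 10
theorem stmt10 (ν ξ : Fin 3 → ℝ) (hν : norm3 ν = 1) :
    Pplus ν * Piplus ν ξ = ((kPlus ν ξ : ℝ) : ℂ) • Pplus ν + theta ν ξ * Pminus ν ∧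
    Pplus ν * Piminus ν ξ = ((kMinus ν ξ : ℝ) : ℂ) • Pplus ν - theta ν ξ * Pminus ν ∧
    Pminus ν * Piplus ν ξ = ((kMinus ν ξ : ℝ) : ℂ) • Pminus ν + theta ν ξ * Pplus ν ∧
    Pminus ν * Piminus ν ξ = ((kPlus ν ξ : ℝ) : ℂ) • Pminus ν - theta ν ξ * Pplus ν ∧
    Pplus ν * Piplus ν ξ * Pplus ν = ((kPlus ν ξ : ℝ) : ℂ) • Pplus ν ∧
    Pminus ν * Piminus ν ξ * Pminus ν = ((kPlus ν ξ : ℝ) : ℂ) • Pminus ν ∧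
    Pplus ν * Piminus ν ξ * Pminus ν = -(theta ν ξ * Pminus ν) ∧
    Pminus ν * Piplus ν ξ * Pplus ν = theta ν ξ * Pplus ν := by
  have hinner : inner3 ν ν = 1 := Real.sqrt_eq_one.mp hν
  have hA := hA2mat ν hinner
  have hAS := hASmat ν ξ
  set c : ℂ := ((lam ν ξ : ℂ))⁻¹ with hc
  have hkP : ((kPlus ν ξ : ℝ) : ℂ) = (1 + c)/2 := by
    rw [kPlus, hc]; push_cast; ring
  have hkM : ((kMinus ν ξ : ℝ) : ℂ) = (1 - c)/2 := by
    rw [kMinus, hc]; push_cast; ring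
  have hθ : theta ν ξ = (c/2) • sDot (cross3 ν ξ) := by
    rw [theta, hc]
    congr 1
    push_cast
    rw [mul_inv]
    ring
  have e1 : Pplus ν * Piplus ν ξ = ((kPlus ν ξ : ℝ) : ℂ) • Pplus ν + theta ν ξ * Pminus ν := by
    rw [hkP, hθ]; exact absL1 _ _ _ hA hAS
  have e2 : Pplus ν * Piminus ν ξ = ((kMinus ν ξ : ℝ) : ℂ) • Pplus ν - theta ν ξ * Pminus ν := by
    rw [hkM, hθ]; exact absL2 _ _ _ hA hAS
  have e3 : Pminus ν * Piplus ν ξ = ((kMinus ν ξ : ℝ) : ℂ) • Pminus ν + theta ν ξ * Pplus ν := by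
    rw [hkM, hθ]; exact absL3 _ _ _ hA hAS
  have e4 : Pminus ν * Piminus ν ξ = ((kPlus ν ξ : ℝ) : ℂ) • Pminus ν - theta ν ξ * Pplus ν := by
    rw [hkP, hθ]; exact absL4 _ _ _ hA hAS
  have pp : Pplus ν * Pplus ν = Pplus ν := absPp2 _ hA
  have mm : Pminus ν * Pminus ν = Pminus ν := absPm2 _ hA
  have mp : Pminus ν * Pplus ν = 0 := absPmPp _ hA
  have pm : Pplus ν * Pminus ν = 0 := absPpPm _ hA
  refine ⟨e1, e2, e3, e4, ?_, ?_, ?_, ?_⟩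
  · rw [e1, add_mul, smul_mul_assoc, pp, mul_assoc, mp, mul_zero, add_zero]
  · rw [e4, sub_mul, smul_mul_assoc, mm, mul_assoc, pm, mul_zero, sub_zero]
  · rw [e2, sub_mul, smul_mul_assoc, pm, mul_assoc, mm, smul_zero, zero_sub]
  · rw [e3, add_mul, smul_mul_assoc, mp, mul_assoc, pp, smul_zero, zero_add]

end
end

section
/- Assume ν × ξ ≠ 0 (so that λ > 1 and k₋ > 0), and let h > 0 and ε ∈ ℝ. Define A₀ : ℝ → Matrix (Fin 4) (Fin 4) ℂ by A₀(τ') := e^{(τ'−ε)ρ₋/h} · k₋⁻¹ · Π₋ P₊. Then: (i) A₀ is differentiable and h A₀′(τ') = L₀ A₀(τ') for all τ' ∈ ℝ; (ii) P₊ A₀(ε) = P₊; (iii) Π₋ P₊ = (k₋ I₄ − Θ) P₊, so that A₀(τ') = e^{(τ'−ε)ρ₋/h} (I₄ − k₋⁻¹ Θ) P₊. -/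
open Matrix Complex

noncomputable section

attribute [local instance] Matrix.normedAddCommGroup Matrix.normedSpace

/-
Write `c = iβ(α·ν)` and `T = S·τ`. The Clifford relations give `c² = |ν|² = 1`, `T² = |τ|²` and,
because `τ ⊥ ν`, `Tc = −cT`; hence `M = λ⁻¹(T − c)` also squares to `1`. Then `P₊ = (1 − c)/2`
and `Π₋ = (1 − M)/2` are the projections onto the `−1`-eigenspaces of `c` and `M`. Since
`s L₀ = i⟨ν,ξ⟩ + λM`, we get `L₀Π₋ = ρ₋Π₋`, so `t ↦ e^{(t−ε)ρ₋/h} Π₋X` solves `h A' = L₀A`.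
From `cP₊ = −P₊` one reads off `Π₋P₊ = (k₋ − Θ)P₊`, and `T` maps the range of `P₊` into its
kernel, so `P₊Π₋P₊ = k₋P₊`; finally `λ > 1` makes `k₋ ≠ 0`.
-/

lemma diracAlpha_zero : diracAlpha 0 = !![0, 0, 0, 1; 0, 0, 1, 0; 0, 1, 0, 0; 1, 0, 0, 0] := by
  ext i j
  fin_cases i <;> fin_cases j <;> rfl

lemma diracAlpha_one : diracAlpha 1 = !![0, 0, 0, -I; 0, 0, I, 0; 0, -I, 0, 0; I, 0, 0, 0] := by
  ext i j
  fin_cases i <;> fin_cases j <;> rfl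

lemma diracAlpha_two : diracAlpha 2 = !![0, 0, 1, 0; 0, 0, 0, -1; 1, 0, 0, 0; 0, -1, 0, 0] := by
  ext i j
  fin_cases i <;> fin_cases j <;> rfl

lemma diracBeta_eq : diracBeta = !![1, 0, 0, 0; 0, 1, 0, 0; 0, 0, -1, 0; 0, 0, 0, -1] := by
  ext i j
  fin_cases i <;> fin_cases j <;> first | rfl | exact neg_zero

lemma alphaDot_eq (x : Fin 3 → ℝ) : alphaDot x =
    !![0, 0, (x 2 : ℂ), x 0 - I * x 1;
       0, 0, x 0 + I * x 1, -(x 2 : ℂ);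
       (x 2 : ℂ), x 0 - I * x 1, 0, 0;
       x 0 + I * x 1, -(x 2 : ℂ), 0, 0] := by
  rw [alphaDot, diracAlpha_zero, diracAlpha_one, diracAlpha_two]
  ext i j
  fin_cases i <;> fin_cases j <;> simp <;> ring

lemma gamma5_eq : gamma5 = !![0, 0, 1, 0; 0, 0, 0, 1; 1, 0, 0, 0; 0, 1, 0, 0] := by
  rw [gamma5, diracAlpha_zero, diracAlpha_one, diracAlpha_two]
  ext i j
  fin_cases i <;> fin_cases j <;> simp

lemma diracBeta_mul_self : diracBeta * diracBeta = 1 := by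
  rw [diracBeta_eq]
  ext i j
  fin_cases i <;> fin_cases j <;> simp

lemma gamma5_mul_self : gamma5 * gamma5 = 1 := by
  rw [gamma5_eq]
  ext i j
  fin_cases i <;> fin_cases j <;> simp

lemma gamma5_mul_diracBeta : gamma5 * diracBeta = -(diracBeta * gamma5) := by
  rw [gamma5_eq, diracBeta_eq]
  ext i j
  fin_cases i <;> fin_cases j <;> simp

lemma diracBeta_mul_alphaDot (x : Fin 3 → ℝ) :
    diracBeta * alphaDot x = -(alphaDot x * diracBeta) := by
  rw [alphaDot_eq, diracBeta_eq]
  ext i j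
  fin_cases i <;> fin_cases j <;> simp

lemma gamma5_mul_alphaDot (x : Fin 3 → ℝ) : gamma5 * alphaDot x = alphaDot x * gamma5 := by
  rw [alphaDot_eq, gamma5_eq]
  ext i j
  fin_cases i <;> fin_cases j <;> simp

lemma alphaDot_mul_alphaDot (x y : Fin 3 → ℝ) :
    alphaDot x * alphaDot y = (inner3 x y : ℂ) • 1 - I • sDot (cross3 x y) := by
  rw [sDot, gamma5_eq, alphaDot_eq x, alphaDot_eq y, alphaDot_eq]
  ext i j
  fin_cases i <;> fin_cases j <;> simp [inner3, cross3] <;> ring_nf <;> simp only [I_sq] <;> ring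

lemma cross3_self (x : Fin 3 → ℝ) : cross3 x x = 0 := by
  ext i; fin_cases i <;> simp [cross3, mul_comm]

lemma inner3_cross3_self (x y : Fin 3 → ℝ) : inner3 (cross3 x y) x = 0 := by
  simp only [inner3, cross3, Fin.isValue, cons_val_zero, cons_val_one, cons_val]
  ring

lemma cross3_anticomm (x y : Fin 3 → ℝ) : cross3 y x = -cross3 x y := by
  ext i; fin_cases i <;> simp [cross3, mul_comm]

lemma inner3_comm (x y : Fin 3 → ℝ) : inner3 y x = inner3 x y := by
  simp only [inner3]; ring

lemma alphaDot_neg (x : Fin 3 → ℝ) : alphaDot (-x) = -alphaDot x := by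
  simp only [alphaDot, Pi.neg_apply, ofReal_neg, neg_smul]; abel

lemma sDot_neg (x : Fin 3 → ℝ) : sDot (-x) = -sDot x := by
  rw [sDot, sDot, alphaDot_neg, mul_neg]

lemma sDot_zero : sDot 0 = 0 := by
  simp [sDot, alphaDot]

lemma alphaDot_mul_self (x : Fin 3 → ℝ) : alphaDot x * alphaDot x = (inner3 x x : ℂ) • 1 := by
  rw [alphaDot_mul_alphaDot, cross3_self, sDot_zero, smul_zero, sub_zero]

lemma alphaDot_anticomm (x y : Fin 3 → ℝ) :
    alphaDot x * alphaDot y + alphaDot y * alphaDot x = (2 * inner3 x y : ℂ) • 1 := by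
  rw [alphaDot_mul_alphaDot, alphaDot_mul_alphaDot, cross3_anticomm, sDot_neg, inner3_comm]
  module

lemma sDot_mul_self (x : Fin 3 → ℝ) : sDot x * sDot x = (inner3 x x : ℂ) • 1 := by
  rw [sDot, neg_mul_neg, mul_assoc, ← mul_assoc (alphaDot x), ← gamma5_mul_alphaDot,
    ← mul_assoc, ← mul_assoc, gamma5_mul_self, one_mul, alphaDot_mul_self]

lemma sDot_mul_diracBeta (x : Fin 3 → ℝ) : sDot x * diracBeta = diracBeta * sDot x := by
  rw [sDot, neg_mul, mul_neg, mul_assoc, ← neg_neg (alphaDot x * diracBeta),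
    ← diracBeta_mul_alphaDot, mul_neg, neg_neg, ← mul_assoc, gamma5_mul_diracBeta, neg_mul,
    mul_assoc]

lemma sDot_mul_alphaDot_add (x y : Fin 3 → ℝ) :
    sDot x * alphaDot y + alphaDot y * sDot x = -((2 * inner3 x y : ℂ) • gamma5) := by
  rw [sDot, neg_mul, mul_neg, ← mul_assoc, ← gamma5_mul_alphaDot, mul_assoc, mul_assoc,
    ← neg_add, ← mul_add, alphaDot_anticomm, mul_smul_comm, mul_one]

lemma sDot_anticomm_of_inner3_eq_zero {x y : Fin 3 → ℝ} (hxy : inner3 x y = 0) :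
    sDot x * (I • (diracBeta * alphaDot y)) = -((I • (diracBeta * alphaDot y)) * sDot x) := by
  have h := sDot_mul_alphaDot_add x y
  rw [hxy, ofReal_zero, mul_zero, zero_smul, neg_zero, add_eq_zero_iff_eq_neg] at h
  rw [mul_smul_comm, smul_mul_assoc, ← mul_assoc, sDot_mul_diracBeta, mul_assoc, h, mul_assoc,
    mul_neg, smul_neg]

lemma I_smul_diracBeta_mul_alphaDot_mul_self (x : Fin 3 → ℝ) :
    (I • (diracBeta * alphaDot x)) * (I • (diracBeta * alphaDot x)) = (inner3 x x : ℂ) • 1 := by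
  have hβ : diracBeta * alphaDot x * (diracBeta * alphaDot x) = -(alphaDot x * alphaDot x) := by
    rw [mul_assoc, ← mul_assoc (alphaDot x), ← neg_neg (alphaDot x * diracBeta),
      ← diracBeta_mul_alphaDot, neg_mul, mul_neg, ← mul_assoc, ← mul_assoc, diracBeta_mul_self,
      one_mul]
  rw [smul_mul_smul_comm, I_mul_I, hβ, neg_one_smul, neg_neg, alphaDot_mul_self]

lemma I_smul_alphaDot_mul_add_diracBeta (x y : Fin 3 → ℝ) :
    (I • alphaDot x) * (alphaDot y + diracBeta) =
      (I * inner3 x y) • 1 + sDot (cross3 x y) - I • (diracBeta * alphaDot x) := by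
  rw [smul_mul_assoc, mul_add, alphaDot_mul_alphaDot, ← neg_neg (alphaDot x * diracBeta),
    ← diracBeta_mul_alphaDot, smul_add, smul_sub, smul_smul, smul_smul, I_mul_I, smul_neg]
  module

section Involution

variable {A : Type*} [Ring A]

lemma sub_mul_self_of_anticomm {c T : A} (hTc : T * c = -(c * T)) :
    (T - c) * (T - c) = T * T + c * c := by
  rw [sub_mul, mul_sub, mul_sub, hTc]
  abel

variable [Algebra ℂ A]

lemma mul_half_one_sub_of_mul_self_eq_one {M : A} (hM : M * M = 1) :
    M * ((1 / 2 : ℂ) • (1 - M)) = -((1 / 2 : ℂ) • (1 - M)) := by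
  rw [mul_smul_comm, mul_sub, mul_one, hM]
  module

lemma half_one_sub_mul_self {M : A} (hM : M * M = 1) :
    ((1 / 2 : ℂ) • (1 - M)) * ((1 / 2 : ℂ) • (1 - M)) = (1 / 2 : ℂ) • (1 - M) := by
  rw [smul_mul_assoc, sub_mul, one_mul, mul_half_one_sub_of_mul_self_eq_one hM]
  module

lemma half_one_sub_mul_mul_half_one_sub_of_anticomm {c T : A} (hc : c * c = 1)
    (hTc : T * c = -(c * T)) :
    ((1 / 2 : ℂ) • (1 - c)) * (T * ((1 / 2 : ℂ) • (1 - c))) = 0 := by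
  have hswap : ((1 / 2 : ℂ) • (1 - c)) * T = T * ((1 / 2 : ℂ) • (1 + c)) := by
    rw [smul_mul_assoc, sub_mul, one_mul, mul_smul_comm, mul_add, mul_one, hTc]
    module
  rw [← mul_assoc, hswap, mul_assoc, smul_mul_assoc, add_mul, one_mul,
    mul_half_one_sub_of_mul_self_eq_one hc, add_neg_cancel, smul_zero, mul_zero]

lemma half_one_sub_smul_sub_mul_half_one_sub {c : A} (hc : c * c = 1) (μ : ℂ) (T : A) :
    ((1 / 2 : ℂ) • (1 - μ • (T - c))) * ((1 / 2 : ℂ) • (1 - c)) =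
      (((1 - μ) / 2 : ℂ) • 1 - (μ / 2) • T) * ((1 / 2 : ℂ) • (1 - c)) := by
  rw [smul_mul_assoc, sub_mul, one_mul, smul_mul_assoc, sub_mul,
    mul_half_one_sub_of_mul_self_eq_one hc, sub_mul, smul_mul_assoc, one_mul, smul_mul_assoc]
  module

end Involution

lemma inner3_self_nonneg (x : Fin 3 → ℝ) : 0 ≤ inner3 x x := by
  simp only [inner3]
  linarith [mul_self_nonneg (x 0), mul_self_nonneg (x 1), mul_self_nonneg (x 2)]

lemma inner3_self_pos {x : Fin 3 → ℝ} (hx : x ≠ 0) : 0 < inner3 x x := by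
  refine (inner3_self_nonneg x).lt_of_ne' fun h0 => hx ?_
  have hsq : x 0 ^ 2 = 0 ∧ x 1 ^ 2 = 0 ∧ x 2 ^ 2 = 0 := by
    simp only [inner3] at h0
    refine ⟨?_, ?_, ?_⟩ <;> nlinarith [sq_nonneg (x 0), sq_nonneg (x 1), sq_nonneg (x 2)]
  ext i
  fin_cases i <;> simp_all

section Dirac

variable (ν ξ : Fin 3 → ℝ)

lemma lam_sq : lam ν ξ ^ 2 = inner3 (cross3 ν ξ) (cross3 ν ξ) + 1 :=
  Real.sq_sqrt (by linarith [inner3_self_nonneg (cross3 ν ξ)])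

lemma lam_pos : 0 < lam ν ξ :=
  Real.sqrt_pos.mpr (by linarith [inner3_self_nonneg (cross3 ν ξ)])

variable {ν ξ} in
lemma kMinus_pos (hτ : cross3 ν ξ ≠ 0) : 0 < kMinus ν ξ := by
  have hlam : 1 < lam ν ξ := Real.lt_sqrt_of_sq_lt (by linarith [inner3_self_pos hτ])
  rw [kMinus]
  linarith [inv_lt_one_of_one_lt₀ hlam]

variable {ν} (hν : inner3 ν ν = 1)
include hν

lemma I_smul_diracBeta_mul_alphaDot_mul_self_eq_one :
    (I • (diracBeta * alphaDot ν)) * (I • (diracBeta * alphaDot ν)) = 1 := by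
  rw [I_smul_diracBeta_mul_alphaDot_mul_self, hν, ofReal_one, one_smul]

lemma Piminus_mul_Pplus :
    Piminus ν ξ * Pplus ν = (((kMinus ν ξ : ℝ) : ℂ) • 1 - theta ν ξ) * Pplus ν := by
  have hk : ((kMinus ν ξ : ℝ) : ℂ) = (1 - (lam ν ξ : ℂ)⁻¹) / 2 := by simp [kMinus]
  have hθ : theta ν ξ = ((lam ν ξ : ℂ)⁻¹ / 2) • sDot (cross3 ν ξ) := by
    rw [theta, ofReal_mul, ofReal_ofNat, mul_inv, div_eq_mul_inv, mul_comm]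
  rw [Piminus, Pplus, half_one_sub_smul_sub_mul_half_one_sub
    (I_smul_diracBeta_mul_alphaDot_mul_self_eq_one hν), hk, hθ]

lemma Pplus_mul_Piminus_mul_Pplus :
    Pplus ν * (Piminus ν ξ * Pplus ν) = ((kMinus ν ξ : ℝ) : ℂ) • Pplus ν := by
  have hc := I_smul_diracBeta_mul_alphaDot_mul_self_eq_one hν
  have hTc := sDot_anticomm_of_inner3_eq_zero (inner3_cross3_self ν ξ)
  rw [Piminus_mul_Pplus ξ hν, theta, sub_mul, smul_mul_assoc, one_mul, smul_mul_assoc, mul_sub,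
    mul_smul_comm, mul_smul_comm, Pplus, half_one_sub_mul_self hc,
    half_one_sub_mul_mul_half_one_sub_of_anticomm hc hTc, smul_zero, sub_zero]

lemma L0_mul_Piminus (s : ℝ) : L0 ν ξ s * Piminus ν ξ = rhoM ν ξ s • Piminus ν ξ := by
  set T := sDot (cross3 ν ξ)
  set c := I • (diracBeta * alphaDot ν)
  have hlam : (lam ν ξ : ℂ) ≠ 0 := ofReal_ne_zero.mpr (lam_pos ν ξ).ne'
  have hM : ((lam ν ξ : ℂ)⁻¹ • (T - c)) * ((lam ν ξ : ℂ)⁻¹ • (T - c)) = 1 := by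
    have hsq : (lam ν ξ : ℂ) ^ 2 = inner3 (cross3 ν ξ) (cross3 ν ξ) + 1 := by
      exact_mod_cast lam_sq ν ξ
    calc ((lam ν ξ : ℂ)⁻¹ • (T - c)) * ((lam ν ξ : ℂ)⁻¹ • (T - c))
        _ = ((lam ν ξ : ℂ)⁻¹ ^ 2 * (inner3 (cross3 ν ξ) (cross3 ν ξ) + 1)) • 1 := by
          rw [smul_mul_smul_comm,
            sub_mul_self_of_anticomm (sDot_anticomm_of_inner3_eq_zero (inner3_cross3_self ν ξ)),
            sDot_mul_self,
            I_smul_diracBeta_mul_alphaDot_mul_self_eq_one hν]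
          module
        _ = 1 := by rw [← hsq, inv_pow, inv_mul_cancel₀ (pow_ne_zero 2 hlam), one_smul]
  have hL : L0 ν ξ s =
      (s : ℂ)⁻¹ • ((I * inner3 ν ξ) • 1 + (lam ν ξ : ℂ) • ((lam ν ξ : ℂ)⁻¹ • (T - c))) := by
    rw [L0, I_smul_alphaDot_mul_add_diracBeta, smul_smul, mul_inv_cancel₀ hlam, one_smul,
      add_sub_assoc]
  rw [hL, Piminus, smul_mul_assoc, add_mul, smul_mul_assoc, one_mul, smul_mul_assoc,
    mul_half_one_sub_of_mul_self_eq_one hM, rhoM]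
  module

end Dirac

lemma hasDerivAt_cexp_smul {E : Type*} [NormedAddCommGroup E] [NormedSpace ℂ E]
    (ρ h : ℂ) (ε t : ℝ) (C : E) :
    HasDerivAt (fun t : ℝ => cexp (((t - ε : ℝ) : ℂ) * ρ / h) • C)
      ((ρ / h) • cexp (((t - ε : ℝ) : ℂ) * ρ / h) • C) t := by
  have hlin : HasDerivAt (fun t : ℝ => ((t - ε : ℝ) : ℂ) * ρ / h) (ρ / h) t := by
    simpa using ((((hasDerivAt_id t).sub_const ε).ofReal_comp.mul_const ρ).div_const h)
  simpa [smul_smul, mul_comm] using hlin.cexp.smul_const C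

lemma smul_deriv_cexp_smul_of_apply_eq_smul {E : Type*} [NormedAddCommGroup E]
    [NormedSpace ℂ E] {L : E →ₗ[ℂ] E} {C : E} {ρ h : ℂ} (hLC : L C = ρ • C) (hh : h ≠ 0)
    (ε t : ℝ) :
    h • deriv (fun t : ℝ => cexp (((t - ε : ℝ) : ℂ) * ρ / h) • C) t =
      L (cexp (((t - ε : ℝ) : ℂ) * ρ / h) • C) := by
  rw [(hasDerivAt_cexp_smul ρ h ε t C).deriv, smul_smul, mul_div_cancel₀ _ hh, map_smul, hLC,
    smul_comm]

theorem stmt14_general (ν ξ : Fin 3 → ℝ) (s : ℝ) (hν : norm3 ν = 1)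
    (hτ : cross3 ν ξ ≠ 0) (h ε : ℝ) (hh : 0 < h) :
    ∀ A0 : ℝ → Matrix (Fin 4) (Fin 4) ℂ,
      A0 = (fun τ' : ℝ =>
        Complex.exp (((τ' - ε : ℝ) : ℂ) * rhoM ν ξ s / (h : ℂ)) •
          (((kMinus ν ξ : ℝ) : ℂ)⁻¹ • (Piminus ν ξ * Pplus ν))) →
      ((∀ τ' : ℝ, DifferentiableAt ℝ A0 τ') ∧
        (∀ τ' : ℝ, (h : ℂ) • deriv A0 τ' = L0 ν ξ s * A0 τ')) ∧
      Pplus ν * A0 ε = Pplus ν ∧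
      Piminus ν ξ * Pplus ν = (((kMinus ν ξ : ℝ) : ℂ) • 1 - theta ν ξ) * Pplus ν ∧
      (∀ τ' : ℝ, A0 τ' = Complex.exp (((τ' - ε : ℝ) : ℂ) * rhoM ν ξ s / (h : ℂ)) •
        ((1 - ((kMinus ν ξ : ℝ) : ℂ)⁻¹ • theta ν ξ) * Pplus ν)) := by
  rintro A0 rfl
  have hν1 : inner3 ν ν = 1 := Real.sqrt_eq_one.mp hν
  have hk : ((kMinus ν ξ : ℝ) : ℂ) ≠ 0 := ofReal_ne_zero.mpr (kMinus_pos hτ).ne'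
  have hPiP := Piminus_mul_Pplus ξ hν1
  have hLC : LinearMap.mulLeft ℂ (L0 ν ξ s) (((kMinus ν ξ : ℝ) : ℂ)⁻¹ • (Piminus ν ξ * Pplus ν)) =
      rhoM ν ξ s • ((((kMinus ν ξ : ℝ) : ℂ))⁻¹ • (Piminus ν ξ * Pplus ν)) := by
    rw [LinearMap.mulLeft_apply, mul_smul_comm, ← mul_assoc, L0_mul_Piminus ξ hν1, smul_mul_assoc,
      smul_comm]
  refine ⟨⟨fun t => (hasDerivAt_cexp_smul _ _ _ _ _).differentiableAt,
    fun t => smul_deriv_cexp_smul_of_apply_eq_smul hLC (ofReal_ne_zero.mpr hh.ne') ε t⟩,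
    ?_, hPiP, fun t => ?_⟩
  · simp only [sub_self, ofReal_zero, zero_mul, zero_div, exp_zero, one_smul]
    rw [mul_smul_comm, Pplus_mul_Piminus_mul_Pplus ξ hν1, inv_smul_smul₀ hk]
  · rw [hPiP, ← smul_mul_assoc, smul_sub, inv_smul_smul₀ hk]

theorem stmt14 (ν ξ : Fin 3 → ℝ) (s : ℝ) (hν : norm3 ν = 1) (hs : 0 < s)
    (hτ : cross3 ν ξ ≠ 0) (h ε : ℝ) (hh : 0 < h) :
    ∀ A0 : ℝ → Matrix (Fin 4) (Fin 4) ℂ,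
      A0 = (fun τ' : ℝ =>
        Complex.exp (((τ' - ε : ℝ) : ℂ) * rhoM ν ξ s / (h : ℂ)) •
          (((kMinus ν ξ : ℝ) : ℂ)⁻¹ • (Piminus ν ξ * Pplus ν))) →
      ((∀ τ' : ℝ, DifferentiableAt ℝ A0 τ') ∧
        (∀ τ' : ℝ, (h : ℂ) • deriv A0 τ' = L0 ν ξ s * A0 τ')) ∧
      Pplus ν * A0 ε = Pplus ν ∧
      Piminus ν ξ * Pplus ν = (((kMinus ν ξ : ℝ) : ℂ) • 1 - theta ν ξ) * Pplus ν ∧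
      (∀ τ' : ℝ, A0 τ' = Complex.exp (((τ' - ε : ℝ) : ℂ) * rhoM ν ξ s / (h : ℂ)) •
        ((1 - ((kMinus ν ξ : ℝ) : ℂ)⁻¹ • theta ν ξ) * Pplus ν)) :=
  stmt14_general ν ξ s hν hτ h ε hh
end
end
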